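/- arXiv:2603.04268 — 3 statements merged into one kernel-verified Lean document; each statement's English description precedes it below -/
import Mathlib

section
/- Let φ be an entire function that is πi-periodic (φ(z + πi) = φ(z) for all z) and satisfies |φ(x+iy)| ≤ C e^{x²} for all x, y ∈ ℝ. Then φ(z) = Σ_{n∈ℤ} a_n e^{2nz} where the coefficients satisfy |a_n| ≤ C' e^{-n²} for all n ∈ ℤ (with C' depending only on C). Consequently e^{-z²} φ(z) = Σ_{n∈ℤ} c_n e^{-(z-n)²} with (c_n) = (a_n e^{n²}) bounded. -/
open Complex Filter

private lemma stmt2_const (φ : ℂ → ℂ) (hφ : Differentiable ℂ φ)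
    (hper : ∀ z : ℂ, φ (z + Real.pi * Complex.I) = φ z) (n : ℤ) (x₁ x₂ : ℝ) :
    (∫ t in (0:ℝ)..Real.pi, φ ((x₁:ℂ) + t*I) * Complex.exp (-2*(n:ℂ)*((x₁:ℂ) + t*I)))
      = ∫ t in (0:ℝ)..Real.pi, φ ((x₂:ℂ) + t*I) * Complex.exp (-2*(n:ℂ)*((x₂:ℂ) + t*I)) := by
  set g : ℂ → ℂ := fun z => φ z * Complex.exp (-2*n*z) with hg
  have hgd : Differentiable ℂ g :=
    hφ.mul (Complex.differentiable_exp.comp (differentiable_id.const_mul _))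
  have h0 := Complex.integral_boundary_rect_eq_zero_of_differentiableOn g (x₁ : ℂ)
    ((x₂ : ℂ) + Real.pi * I) hgd.differentiableOn
  simp only [Complex.add_re, Complex.add_im, Complex.ofReal_re, Complex.ofReal_im,
    Complex.mul_re, Complex.mul_im, Complex.I_re, Complex.I_im, mul_zero, mul_one,
    zero_mul, sub_zero, zero_add, zero_sub, add_zero, Complex.ofReal_zero,
    neg_zero] at h0
  have hpg : ∀ x : ℝ, g ((x:ℂ) + Real.pi * I) = g x := by
    intro x
    have h1 : φ ((x:ℂ) + Real.pi * I) = φ x := hper x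
    have h2 : Complex.exp (-2*n*((x:ℂ) + Real.pi * I)) = Complex.exp (-2*n*(x:ℂ)) := by
      rw [show (-2*(n:ℂ)*((x:ℂ) + Real.pi * I)) = -2*n*(x:ℂ) + (-n) * (2 * Real.pi * I) by
        push_cast; ring, Complex.exp_add]
      rw [show (-(n:ℂ)) = ((-n : ℤ) : ℂ) by push_cast; ring_nf,
        Complex.exp_int_mul_two_pi_mul_I, mul_one]
    simp only [hg, h1, h2]
  have hcancel : (∫ x : ℝ in x₁..x₂, g x) = ∫ x : ℝ in x₁..x₂, g ((x:ℂ) + Real.pi * I) := by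
    refine intervalIntegral.integral_congr fun x _ => ?_
    exact (hpg x).symm
  rw [← hcancel, sub_self, zero_add, sub_eq_zero] at h0
  have := smul_right_injective ℂ (Complex.I_ne_zero) h0
  simpa [hg] using this.symm

private lemma stmt2_summable (x : ℝ) : Summable (fun n : ℤ => Real.exp (2*n*x - (n:ℝ)^2)) := by
  have hτ : (0:ℝ) < (I / (Real.pi:ℂ)).im := by
    simp only [Complex.div_im, Complex.I_im, Complex.I_re, Complex.ofReal_re,
      Complex.ofReal_im, Complex.normSq_ofReal]
    rw [one_mul, zero_mul, zero_div, sub_zero]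
    positivity
  have h : Summable (fun n : ℤ => jacobiTheta₂_term n (-(x:ℂ) * I / Real.pi) (I / Real.pi)) :=
    (summable_jacobiTheta₂_term_iff _ _).mpr hτ
  have heq : ∀ n : ℤ, jacobiTheta₂_term n (-(x:ℂ) * I / Real.pi) (I / Real.pi)
      = ((Real.exp (2*n*x - (n:ℝ)^2) : ℝ) : ℂ) := by
    intro n
    rw [jacobiTheta₂_term]
    have hπ : (Real.pi : ℂ) ≠ 0 := Complex.ofReal_ne_zero.mpr Real.pi_ne_zero
    have harg : 2 * (Real.pi:ℂ) * I * n * (-(x:ℂ) * I / Real.pi)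
        + Real.pi * I * (n:ℂ) ^ 2 * (I / Real.pi)
        = ((2*n*x - (n:ℝ)^2 : ℝ) : ℂ) := by
      push_cast
      field_simp
      rw [Complex.I_sq]
      ring
    rw [harg, Complex.ofReal_exp]
  rw [show (fun n : ℤ => Real.exp (2*n*x - (n:ℝ)^2))
      = fun n : ℤ => ‖jacobiTheta₂_term n (-(x:ℂ) * I / Real.pi) (I / Real.pi)‖ by
    funext n; rw [heq n, Complex.norm_real, Real.norm_eq_abs, abs_of_pos (Real.exp_pos _)]]
  exact h.norm

/-- A `πi`-periodic entire function with `|φ(x+iy)| ≤ C e^{x²}` expands as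
`φ(z) = Σ_{n∈ℤ} a_n e^{2nz}` with `|a_n| ≤ C' e^{-n²}`; consequently
`e^{-z²} φ(z) = Σ c_n e^{-(z-n)²}` with `c_n = a_n e^{n²}` bounded. -/
theorem stmt2 (φ : ℂ → ℂ) (hφ : Differentiable ℂ φ)
    (hper : ∀ z : ℂ, φ (z + Real.pi * Complex.I) = φ z)
    (C : ℝ) (hC : ∀ x y : ℝ, ‖φ ((x : ℂ) + y * Complex.I)‖ ≤ C * Real.exp (x ^ 2)) :
    ∃ a : ℤ → ℂ,
      (∀ z : ℂ, HasSum (fun n : ℤ => a n * Complex.exp (2 * n * z)) (φ z)) ∧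
      (∃ C' : ℝ, ∀ n : ℤ, ‖a n‖ ≤ C' * Real.exp (-(n : ℝ) ^ 2)) ∧
      (∀ z : ℂ, HasSum
        (fun n : ℤ => (a n * Complex.exp ((n : ℂ) ^ 2)) * Complex.exp (-(z - n) ^ 2))
        (Complex.exp (-z ^ 2) * φ z)) ∧
      (∃ B : ℝ, ∀ n : ℤ, ‖a n * Complex.exp ((n : ℂ) ^ 2)‖ ≤ B) := by
  have pi_pos := Real.pi_pos
  haveI : Fact (0 < Real.pi) := ⟨pi_pos⟩
  have hπC : (Real.pi : ℂ) ≠ 0 := Complex.ofReal_ne_zero.mpr Real.pi_ne_zero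
  have hC0 : 0 ≤ C := by
    have := hC 0 0
    simpa using (norm_nonneg (φ ((0:ℝ) + (0:ℝ)*I))).trans this
  set F : ℤ → ℝ → ℂ := fun n x =>
    ∫ t in (0:ℝ)..Real.pi, φ ((x:ℂ) + t*I) * Complex.exp (-2*(n:ℂ)*((x:ℂ) + t*I)) with hF
  set a : ℤ → ℂ := fun n => (Real.pi : ℂ)⁻¹ * F n (n : ℝ) with ha
  -- coefficient bound
  have hbound : ∀ n : ℤ, ‖a n‖ ≤ C * Real.exp (-(n:ℝ)^2) := by
    intro n
    have hb : ∀ t ∈ Set.uIoc (0:ℝ) Real.pi,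
        ‖φ (((n:ℝ):ℂ) + t*I) * Complex.exp (-2*(n:ℂ)*(((n:ℝ):ℂ) + t*I))‖
          ≤ C * Real.exp (-(n:ℝ)^2) := by
      intro t _
      rw [norm_mul]
      have h1 : ‖φ (((n:ℝ):ℂ) + t*I)‖ ≤ C * Real.exp ((n:ℝ)^2) := hC n t
      have h2 : ‖Complex.exp (-2*(n:ℂ)*(((n:ℝ):ℂ) + t*I))‖ = Real.exp (-2*(n:ℝ)^2) := by
        rw [Complex.norm_exp]
        congr 1
        have : (-2*(n:ℂ)*(((n:ℝ):ℂ) + t*I)) = ((-2*(n:ℝ)^2 : ℝ) : ℂ) + ((-2*(n:ℝ)*t : ℝ)) * I := by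
          push_cast; ring
        rw [this]
        simp only [Complex.add_re, Complex.ofReal_re, Complex.mul_I_re, Complex.ofReal_im,
          neg_zero, add_zero]
      rw [h2]
      calc ‖φ (((n:ℝ):ℂ) + t*I)‖ * Real.exp (-2*(n:ℝ)^2)
          ≤ (C * Real.exp ((n:ℝ)^2)) * Real.exp (-2*(n:ℝ)^2) := by
            exact mul_le_mul_of_nonneg_right h1 (Real.exp_pos _).le
        _ = C * Real.exp (-(n:ℝ)^2) := by
            rw [mul_assoc, ← Real.exp_add]; congr 2; ring
    have hint := intervalIntegral.norm_integral_le_of_norm_le_const hb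
    rw [ha, norm_mul]
    have hn : ‖((Real.pi : ℂ))⁻¹‖ = (Real.pi)⁻¹ := by
      rw [norm_inv, Complex.norm_real, Real.norm_eq_abs, abs_of_pos pi_pos]
    rw [hn]
    calc Real.pi⁻¹ * ‖F n (n:ℝ)‖
        ≤ Real.pi⁻¹ * (C * Real.exp (-(n:ℝ)^2) * |Real.pi - 0|) := by
          refine mul_le_mul_of_nonneg_left ?_ (by positivity)
          exact hint
      _ = C * Real.exp (-(n:ℝ)^2) := by
          rw [sub_zero, abs_of_pos pi_pos]
          field_simp
  -- main Fourier expansion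
  have key : ∀ z : ℂ, HasSum (fun n : ℤ => a n * Complex.exp (2 * n * z)) (φ z) := by
    intro z
    set x : ℝ := z.re with hx
    set y : ℝ := z.im with hy
    have hz : (x:ℂ) + (y:ℂ)*I = z := Complex.re_add_im z
    have hp : Function.Periodic (fun t : ℝ => φ ((x:ℂ) + t*I)) Real.pi := by
      intro t
      simp only
      rw [show ((x:ℂ) + ((t + Real.pi : ℝ):ℂ)*I) = ((x:ℂ) + t*I) + Real.pi*I by push_cast; ring]
      exact hper _
    have hcont : Continuous (fun t : ℝ => φ ((x:ℂ) + t*I)) :=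
      hφ.continuous.comp (by continuity)
    set G : C(AddCircle Real.pi, ℂ) := ⟨hp.lift, hcont.quotient_liftOn' _⟩ with hG
    have hFc : ∀ n : ℤ, fourierCoeff (⇑G) n = Complex.exp (2*(n:ℂ)*(x:ℂ)) * a n := by
      intro n
      rw [fourierCoeff_eq_intervalIntegral (⇑G) n 0, zero_add]
      have hint : (∫ t in (0:ℝ)..Real.pi,
            (fourier (-n) ((t:ℝ) : AddCircle Real.pi) : ℂ) • G ((t:ℝ) : AddCircle Real.pi))
          = ∫ t in (0:ℝ)..Real.pi, Complex.exp (2*(n:ℂ)*(x:ℂ)) *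
              (φ ((x:ℂ) + t*I) * Complex.exp (-2*(n:ℂ)*((x:ℂ) + t*I))) := by
        refine intervalIntegral.integral_congr fun t _ => ?_
        rw [smul_eq_mul, show G ((t:ℝ) : AddCircle Real.pi) = φ ((x:ℂ) + t*I) from rfl]
        rw [fourier_coe_apply]
        rw [show Complex.exp (2*(n:ℂ)*(x:ℂ)) * (φ ((x:ℂ) + t*I) * Complex.exp (-2*(n:ℂ)*((x:ℂ) + t*I)))
            = (Complex.exp (2*(n:ℂ)*(x:ℂ)) * Complex.exp (-2*(n:ℂ)*((x:ℂ) + t*I))) * φ ((x:ℂ) + t*I) by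
              ring,
          ← Complex.exp_add]
        congr 2
        push_cast
        field_simp
        ring
      rw [hint, intervalIntegral.integral_const_mul, Complex.real_smul]
      push_cast
      rw [ha]
      simp only
      rw [show F n (n:ℝ) = F n x from stmt2_const φ hφ hper n (n:ℝ) x, one_div]
      ring
    have hsummable : Summable (fun n : ℤ => fourierCoeff (⇑G) n) := by
      apply Summable.of_norm
      refine Summable.of_nonneg_of_le (fun n => norm_nonneg _) ?_
        ((stmt2_summable x).mul_left C)
      intro n
      rw [hFc n, norm_mul]
      have h1 : ‖Complex.exp (2*(n:ℂ)*(x:ℂ))‖ = Real.exp (2*n*x) := by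
        rw [Complex.norm_exp]
        congr 1
        rw [show (2*(n:ℂ)*(x:ℂ)) = ((2*(n:ℝ)*x : ℝ) : ℂ) by push_cast; ring]
        exact Complex.ofReal_re _
      rw [h1]
      calc Real.exp (2*n*x) * ‖a n‖
          ≤ Real.exp (2*n*x) * (C * Real.exp (-(n:ℝ)^2)) :=
            mul_le_mul_of_nonneg_left (hbound n) (Real.exp_pos _).le
        _ = C * Real.exp (2*n*x - (n:ℝ)^2) := by
            rw [← mul_assoc, mul_comm (Real.exp _) C, mul_assoc, ← Real.exp_add,
              sub_eq_add_neg]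
    have hsum := has_pointwise_sum_fourier_series_of_summable hsummable ((y : ℝ) : AddCircle Real.pi)
    have hFy : G ((y:ℝ) : AddCircle Real.pi) = φ z := by
      show φ ((x:ℂ) + y*I) = φ z
      rw [hz]
    have hterm : ∀ n : ℤ,
        fourierCoeff (⇑G) n • (fourier n ((y:ℝ) : AddCircle Real.pi) : ℂ)
          = a n * Complex.exp (2 * n * z) := by
      intro n
      rw [hFc n, smul_eq_mul, fourier_coe_apply]
      rw [show Complex.exp (2*(n:ℂ)*(x:ℂ)) * a n * Complex.exp (2 * Real.pi * I * n * y / Real.pi)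
          = a n * (Complex.exp (2*(n:ℂ)*(x:ℂ)) * Complex.exp (2 * Real.pi * I * n * y / Real.pi)) by
            ring,
        ← Complex.exp_add]
      have harg : 2*(n:ℂ)*(x:ℂ) + 2 * Real.pi * I * n * y / Real.pi = 2 * (n:ℂ) * z := by
        rw [← hz]; field_simp
      rw [harg]
    rw [hFy] at hsum
    exact hsum.congr_fun (fun n => (hterm n).symm)
  refine ⟨a, key, ⟨C, hbound⟩, ?_, ⟨C, ?_⟩⟩
  · intro z
    have h3 := (key z).mul_left (Complex.exp (-z^2))
    have hterm : ∀ n : ℤ, (a n * Complex.exp ((n:ℂ)^2)) * Complex.exp (-(z-n)^2)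
        = Complex.exp (-z^2) * (a n * Complex.exp (2 * n * z)) := by
      intro n
      rw [show Complex.exp (-z^2) * (a n * Complex.exp (2 * n * z))
          = a n * (Complex.exp (-z^2) * Complex.exp (2 * (n:ℂ) * z)) by ring,
        mul_assoc, ← Complex.exp_add, ← Complex.exp_add]
      congr 2
      ring
    simp only [hterm]
    exact h3
  · intro n
    rw [norm_mul]
    have h2 : ‖Complex.exp ((n:ℂ)^2)‖ = Real.exp ((n:ℝ)^2) := by
      rw [Complex.norm_exp]
      congr 1
      rw [show ((n:ℂ)^2) = (((n:ℝ)^2 : ℝ) : ℂ) by push_cast; ring]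
      exact Complex.ofReal_re _
    rw [h2]
    calc ‖a n‖ * Real.exp ((n:ℝ)^2)
        ≤ (C * Real.exp (-(n:ℝ)^2)) * Real.exp ((n:ℝ)^2) :=
          mul_le_mul_of_nonneg_right (hbound n) (Real.exp_pos _).le
      _ = C := by rw [mul_assoc, ← Real.exp_add, neg_add_cancel, Real.exp_zero, mul_one]
end

section
/- Let Γ ⊂ ℝ be a separated set with separation constant d > 0 (|γ−γ'| ≥ d for distinct γ, γ' ∈ Γ). Then the canonical product P⁺(z) = Π_{γ∈Γ, γ≥0} (1 − e^{2(z−γ)}) converges locally uniformly on ℂ and defines an entire function satisfying |P⁺(x+iy)| ≤ C e^{K x²} for all x, y ∈ ℝ, where C, K depend only on d. -/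
open Complex

namespace Stmt12Aux

variable {Γ : Set ℝ} {d : ℝ}

local notation "S" => {γ : ℝ // γ ∈ Γ ∧ 0 ≤ γ}


/-- interval injectivity -/
lemma sep_injOn (hd : 0 < d)
    (hsep : ∀ γ ∈ Γ, ∀ γ' ∈ Γ, γ ≠ γ' → d ≤ |γ - γ'|) (a : ℝ) :
    Set.InjOn (fun γ : S => ⌊(γ.1 - a)/d⌋₊) {γ : S | a ≤ γ.1} := by
  intro γ hγ γ' hγ' h
  simp only [Set.mem_setOf_eq] at hγ hγ'
  by_contra hne
  have hne' : γ.1 ≠ γ'.1 := fun h' => hne (Subtype.ext h')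
  have hds := hsep γ.1 γ.2.1 γ'.1 γ'.2.1 hne'
  simp only at h
  set n := ⌊(γ.1 - a)/d⌋₊ with hn
  have h1 : (n : ℝ) ≤ (γ.1 - a)/d := Nat.floor_le (div_nonneg (by linarith) hd.le)
  have h2 : (γ.1 - a)/d < n + 1 := Nat.lt_floor_add_one _
  have h3 : (n : ℝ) ≤ (γ'.1 - a)/d := h ▸ Nat.floor_le (div_nonneg (by linarith) hd.le)
  have h4 : (γ'.1 - a)/d < n + 1 := by rw [h] at h2 ⊢; exact Nat.lt_floor_add_one _
  have e1 : d * n ≤ γ.1 - a := by rw [mul_comm, ← le_div_iff₀ hd]; exact h1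
  have e2 : γ.1 - a < d * (n + 1) := by rw [mul_comm, ← div_lt_iff₀ hd]; exact h2
  have e3 : d * n ≤ γ'.1 - a := by rw [mul_comm, ← le_div_iff₀ hd]; exact h3
  have e4 : γ'.1 - a < d * (n + 1) := by rw [mul_comm, ← div_lt_iff₀ hd]; exact h4
  rcases abs_cases (γ.1 - γ'.1) with ⟨he, _⟩ | ⟨he, _⟩ <;> rw [he] at hds <;> nlinarith

lemma bdd_finite (hd : 0 < d)
    (hsep : ∀ γ ∈ Γ, ∀ γ' ∈ Γ, γ ≠ γ' → d ≤ |γ - γ'|) (b : ℝ) :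
    {γ : S | γ.1 ≤ b}.Finite := by
  apply Set.Finite.of_finite_image (f := fun γ : S => ⌊(γ.1 - 0)/d⌋₊)
  · apply Set.Finite.subset (Set.finite_Iic ⌊b/d⌋₊)
    rintro n ⟨γ, hγ, rfl⟩
    simp only [Set.mem_Iic]
    exact Nat.floor_le_floor (by rw [sub_zero]; gcongr; exact hγ)
  · exact (sep_injOn hd hsep 0).mono (fun γ _ => by simpa using γ.2.2)

lemma summable_exp_aux (hd : 0 < d)
    (hsep : ∀ γ ∈ Γ, ∀ γ' ∈ Γ, γ ≠ γ' → d ≤ |γ - γ'|) (a : ℝ) :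
    Summable (fun γ : S => Real.exp (2*(a - γ.1))) := by
  have hgeo : Summable (fun n : ℕ => Real.exp (-(2*d)) ^ n) :=
    summable_geometric_of_lt_one (Real.exp_nonneg _)
      (Real.exp_lt_one_iff.mpr (by nlinarith))
  have hinj : Function.Injective (fun γ : S => ⌊(γ.1 - 0)/d⌋₊) := by
    intro γ γ' h
    exact sep_injOn hd hsep 0 (by simpa using γ.2.2) (by simpa using γ'.2.2) h
  have hcomp := hgeo.comp_injective hinj
  have := (hcomp.mul_left (Real.exp (2*a)))
  apply this.of_nonneg_of_le (fun γ => Real.exp_nonneg _)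
  intro γ
  simp only [Function.comp_apply]
  rw [← Real.exp_nat_mul, ← Real.exp_add]
  apply Real.exp_le_exp.mpr
  have h1 : (⌊(γ.1 - 0)/d⌋₊ : ℝ) ≤ (γ.1 - 0)/d := Nat.floor_le (div_nonneg (by rw [sub_zero]; exact γ.2.2) hd.le)
  have : d * (⌊(γ.1 - 0)/d⌋₊ : ℝ) ≤ γ.1 := by
    rw [mul_comm, ← le_div_iff₀ hd]; simpa using h1
  nlinarith




/-- tail sum bound -/
lemma tail_sum_le (hd : 0 < d)
    (hsep : ∀ γ ∈ Γ, ∀ γ' ∈ Γ, γ ≠ γ' → d ≤ |γ - γ'|) (x : ℝ) (s : Finset S)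
    (hs : ∀ γ ∈ s, x ≤ γ.1) :
    ∑ γ ∈ s, Real.exp (2*(x - γ.1)) ≤ (1 - Real.exp (-(2*d)))⁻¹ := by
  classical
  set g : ℕ → ℝ := fun n => Real.exp (-(2*d)) ^ n with hg
  set φ : S → ℕ := fun γ => ⌊(γ.1 - x)/d⌋₊ with hφ
  have hlt1 : Real.exp (-(2*d)) < 1 := Real.exp_lt_one_iff.mpr (by nlinarith)
  have hgeo : Summable g := summable_geometric_of_lt_one (Real.exp_nonneg _) hlt1
  have hstep : ∑ γ ∈ s, Real.exp (2*(x - γ.1)) ≤ ∑ γ ∈ s, g (φ γ) := by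
    apply Finset.sum_le_sum
    intro γ hγ
    have hxγ := hs γ hγ
    have h1 : (φ γ : ℝ) ≤ (γ.1 - x)/d := Nat.floor_le (div_nonneg (by linarith) hd.le)
    have h2 : d * (φ γ : ℝ) ≤ γ.1 - x := by rw [mul_comm, ← le_div_iff₀ hd]; exact h1
    have : g (φ γ) = Real.exp ((φ γ : ℝ) * (-(2*d))) := by
      rw [hg, Real.exp_nat_mul]
    rw [this]
    exact Real.exp_le_exp.mpr (by nlinarith)
  have himg : ∑ γ ∈ s, g (φ γ) = ∑ n ∈ s.image φ, g n := by
    refine (Finset.sum_image ?_).symm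
    intro γ hγ γ' hγ' h
    exact sep_injOn hd hsep x (hs γ hγ) (hs γ' hγ') h
  have htsum : ∑ n ∈ s.image φ, g n ≤ ∑' n, g n :=
    hgeo.sum_le_tsum _ (fun n _ => pow_nonneg (Real.exp_nonneg _) n)
  rw [tsum_geometric_of_lt_one (Real.exp_nonneg _) hlt1] at htsum
  linarith [hstep, himg ▸ htsum]

/-- cardinality bound -/
lemma card_le (hd : 0 < d)
    (hsep : ∀ γ ∈ Γ, ∀ γ' ∈ Γ, γ ≠ γ' → d ≤ |γ - γ'|) (x : ℝ) (hx : 0 ≤ x) (s : Finset S)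
    (hs : ∀ γ ∈ s, γ.1 ≤ x) :
    (s.card : ℝ) ≤ x/d + 1 := by
  classical
  set φ : S → ℕ := fun γ => ⌊(γ.1 - 0)/d⌋₊ with hφ
  have hcard : s.card = (s.image φ).card := by
    refine (Finset.card_image_of_injOn ?_).symm
    exact (sep_injOn hd hsep 0).mono (fun γ _ => by simpa using γ.2.2)
  have hsub : s.image φ ⊆ Finset.range (⌊x/d⌋₊ + 1) := by
    intro n hn
    rw [Finset.mem_image] at hn
    obtain ⟨γ, hγ, rfl⟩ := hn
    rw [Finset.mem_range, Nat.lt_succ_iff]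
    exact Nat.floor_le_floor (by rw [sub_zero]; gcongr; exact hs γ hγ)
  have h2 : (s.image φ).card ≤ ⌊x/d⌋₊ + 1 := by
    simpa using Finset.card_le_card hsub
  have h3 : (⌊x/d⌋₊ : ℝ) ≤ x/d := Nat.floor_le (div_nonneg hx hd.le)
  rw [hcard]
  calc ((s.image φ).card : ℝ) ≤ (⌊x/d⌋₊ : ℝ) + 1 := by exact_mod_cast h2
    _ ≤ x/d + 1 := by linarith

/-- the finset product bound -/
lemma prod_le (hd : 0 < d)
    (hsep : ∀ γ ∈ Γ, ∀ γ' ∈ Γ, γ ≠ γ' → d ≤ |γ - γ'|) (x : ℝ) (s : Finset S) :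
    ∏ γ ∈ s, (1 + Real.exp (2*(x - γ.1))) ≤
      Real.exp (2 + 1/d + (1 - Real.exp (-(2*d)))⁻¹) * Real.exp ((3/d + 1) * x^2) := by
  classical
  set B := (1 - Real.exp (-(2*d)))⁻¹ with hB
  have hB0 : 0 ≤ B := by
    rw [hB]
    have : Real.exp (-(2*d)) < 1 := Real.exp_lt_one_iff.mpr (by nlinarith)
    exact inv_nonneg.mpr (by linarith)
  set s₁ := s.filter (fun γ => γ.1 ≤ x) with hs₁
  set s₂ := s.filter (fun γ => ¬ γ.1 ≤ x) with hs₂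
  have hsplit : ∏ γ ∈ s, (1 + Real.exp (2*(x - γ.1)))
      = (∏ γ ∈ s₁, (1 + Real.exp (2*(x - γ.1)))) * ∏ γ ∈ s₂, (1 + Real.exp (2*(x - γ.1))) :=
    (Finset.prod_filter_mul_prod_filter_not s _ _).symm
  have hhigh : ∏ γ ∈ s₂, (1 + Real.exp (2*(x - γ.1))) ≤ Real.exp B := by
    calc ∏ γ ∈ s₂, (1 + Real.exp (2*(x - γ.1)))
        ≤ ∏ γ ∈ s₂, Real.exp (Real.exp (2*(x - γ.1))) := by
          apply Finset.prod_le_prod (fun γ _ => by positivity)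
          exact fun γ _ => Real.add_one_le_exp _ |>.trans_eq' (by ring_nf)
      _ = Real.exp (∑ γ ∈ s₂, Real.exp (2*(x - γ.1))) := (Real.exp_sum _ _).symm
      _ ≤ Real.exp B := by
          apply Real.exp_le_exp.mpr
          apply tail_sum_le hd hsep x
          intro γ hγ
          rw [hs₂, Finset.mem_filter] at hγ
          linarith [hγ.2]
  rcases s₁.eq_empty_or_nonempty with he | hne
  · rw [hsplit, he, Finset.prod_empty, one_mul]
    calc ∏ γ ∈ s₂, (1 + Real.exp (2*(x - γ.1))) ≤ Real.exp B := hhigh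
      _ ≤ _ := by
          rw [← Real.exp_add]
          apply Real.exp_le_exp.mpr
          have h1 : 0 ≤ (3/d + 1) * x^2 := by positivity
          have h2 : (0:ℝ) ≤ 1/d := by positivity
          linarith
  · -- s₁ nonempty: then 0 ≤ x
    obtain ⟨γ0, hγ0⟩ := hne
    rw [hs₁, Finset.mem_filter] at hγ0
    have hx : 0 ≤ x := le_trans γ0.2.2 hγ0.2
    have hcard : (s₁.card : ℝ) ≤ x/d + 1 := by
      apply card_le hd hsep x hx
      intro γ hγ
      rw [hs₁, Finset.mem_filter] at hγ
      exact hγ.2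
    have hlow : ∏ γ ∈ s₁, (1 + Real.exp (2*(x - γ.1))) ≤ Real.exp ((1 + 2*x) * s₁.card) := by
      calc ∏ γ ∈ s₁, (1 + Real.exp (2*(x - γ.1)))
          ≤ ∏ _γ ∈ s₁, Real.exp (1 + 2*x) := by
            apply Finset.prod_le_prod (fun γ _ => by positivity)
            intro γ hγ
            have hγ0 : 0 ≤ γ.1 := γ.2.2
            have h1 : Real.exp (2*(x - γ.1)) ≤ Real.exp (2*x) :=
              Real.exp_le_exp.mpr (by nlinarith)
            have h2 : (1:ℝ) ≤ Real.exp (2*x) := Real.one_le_exp (by linarith)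
            have h3 : Real.exp (2*x) + Real.exp (2*x) ≤ Real.exp (1 + 2*x) := by
              rw [Real.exp_add]
              have := Real.add_one_le_exp (1:ℝ)
              nlinarith [Real.exp_pos (2*x)]
            linarith
        _ = Real.exp ((1 + 2*x) * s₁.card) := by
            rw [Finset.prod_const, ← Real.exp_nat_mul, mul_comm]
    have hexp : (1 + 2*x) * s₁.card ≤ (1 + 2*x) * (x/d + 1) := by
      apply mul_le_mul_of_nonneg_left hcard (by linarith)
    have hkey : (1 + 2*x) * (x/d + 1) ≤ 2 + 1/d + (3/d + 1) * x^2 := by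
      have hu : (0:ℝ) < 1/d := by positivity
      have hxd : x/d = x * (1/d) := by ring
      have h3d : (3:ℝ)/d = 3 * (1/d) := by ring
      rw [hxd, h3d]
      nlinarith [mul_nonneg hu.le (sq_nonneg (x-1)), sq_nonneg (x-1),
        mul_nonneg hu.le (sq_nonneg x), mul_nonneg hu.le hx]
    calc ∏ γ ∈ s, (1 + Real.exp (2*(x - γ.1)))
        ≤ Real.exp ((1 + 2*x) * s₁.card) * Real.exp B := by
          rw [hsplit]
          exact mul_le_mul hlow hhigh (Finset.prod_nonneg (fun γ _ => by positivity))
            (Real.exp_nonneg _)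
      _ ≤ _ := by
          rw [← Real.exp_add, ← Real.exp_add]
          apply Real.exp_le_exp.mpr
          have := hexp.trans hkey
          linarith






lemma norm_factor (z : ℂ) (γ : ℝ) :
    ‖Complex.exp (2*(z - (γ:ℂ)))‖ = Real.exp (2*(z.re - γ)) := by
  rw [Complex.norm_exp]
  congr 1
  simp [Complex.mul_re]

lemma factor_ne_zero {z : ℂ} {γ : ℝ} (h : z.re < γ) :
    1 - Complex.exp (2*(z - (γ:ℂ))) ≠ 0 := by
  intro h0
  have h1 : Complex.exp (2*(z - (γ:ℂ))) = 1 := by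
    have := sub_eq_zero.mp h0
    exact this.symm
  have h2 : ‖Complex.exp (2*(z - (γ:ℂ)))‖ = 1 := by rw [h1, norm_one]
  rw [norm_factor] at h2
  have h3 : Real.exp (2*(z.re - γ)) < 1 := Real.exp_lt_one_iff.mpr (by linarith)
  linarith

/-- summability of logs on the tail -/
lemma summable_log (hd : 0 < d)
    (hsep : ∀ γ ∈ Γ, ∀ γ' ∈ Γ, γ ≠ γ' → d ≤ |γ - γ'|) (a : ℝ) (T : Set S)
    (hT : ∀ γ : S, γ ∉ T → a + 2 < γ.1) (F : ↥Tᶜ → ℂ)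
    (hF : ∀ γ : ↥Tᶜ, ‖F γ‖ ≤ Real.exp (2*(a + 1 - γ.1.1))) :
    Summable (fun γ : ↥Tᶜ => (3/2 : ℝ) * ‖F γ‖) ∧
    ∀ γ : ↥Tᶜ, ‖Complex.log (1 + F γ)‖ ≤ (3/2 : ℝ) * ‖F γ‖ := by
  have hhalf : ∀ γ : ↥Tᶜ, ‖F γ‖ ≤ 1/2 := by
    intro γ
    have h1 := hF γ
    have h2 : a + 2 < γ.1.1 := hT γ.1 γ.2
    have h3 : Real.exp (2*(a + 1 - γ.1.1)) ≤ Real.exp (-2) :=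
      Real.exp_le_exp.mpr (by linarith)
    have h4 : Real.exp (-2 : ℝ) ≤ 1/2 := by
      rw [Real.exp_neg]
      rw [inv_le_comm₀ (Real.exp_pos _) (by norm_num)]
      have := Real.add_one_le_exp (2:ℝ)
      linarith
    linarith
  constructor
  · apply Summable.mul_left
    have hs : Summable (fun γ : ↥Tᶜ => Real.exp (2*(a + 1 - γ.1.1))) :=
      (summable_exp_aux hd hsep (a+1)).subtype _
    exact hs.of_nonneg_of_le (fun γ => norm_nonneg _) hF
  · intro γ
    exact Complex.norm_log_one_add_half_le_self (hhalf γ)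

lemma mult_aux (hd : 0 < d)
    (hsep : ∀ γ ∈ Γ, ∀ γ' ∈ Γ, γ ≠ γ' → d ≤ |γ - γ'|) (z : ℂ) :
    Multipliable (fun γ : S => 1 - Complex.exp (2 * (z - ((γ : ℝ) : ℂ)))) := by
  classical
  set f : S → ℂ := fun γ => 1 - Complex.exp (2 * (z - ((γ : ℝ) : ℂ))) with hf
  by_cases h0 : ∃ γ : S, f γ = 0
  · obtain ⟨γ0, hγ0⟩ := h0
    refine ⟨0, ?_⟩
    rw [HasProd]
    have hev : ∀ᶠ s : Finset S in Filter.atTop, ∏ γ ∈ s, f γ = 0 := by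
      filter_upwards [Filter.eventually_ge_atTop ({γ0} : Finset S)] with s hs
      exact Finset.prod_eq_zero (hs (Finset.mem_singleton_self γ0)) hγ0
    exact Filter.Tendsto.congr' (hev.mono fun s hs => hs.symm) tendsto_const_nhds
  · push_neg at h0
    -- all factors nonzero: use log
    set T : Set S := {γ : S | γ.1 ≤ z.re + 2} with hT
    have hTfin : T.Finite := bdd_finite hd hsep _
    have hcompl : ∀ γ : S, γ ∉ T → z.re + 2 < γ.1 := by
      intro γ hγ; simpa [hT] using hγ
    have hsumlog : Summable (fun γ : S => Complex.log (f γ)) := by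
      rw [← hTfin.summable_compl_iff]
      have hnorm : ∀ γ : ↥Tᶜ, ‖-Complex.exp (2 * (z - ((γ.1.1 : ℝ) : ℂ)))‖ ≤
          Real.exp (2*(z.re + 1 - γ.1.1)) := by
        intro γ
        rw [norm_neg, norm_factor]
        apply Real.exp_le_exp.mpr
        linarith
      obtain ⟨hsum, hle⟩ := summable_log hd hsep z.re T hcompl _ hnorm
      apply Summable.of_norm_bounded hsum
      intro γ
      have := hle γ
      simpa [hf, sub_eq_add_neg] using this
    have := Complex.multipliable_of_summable_log hsumlog
    exact this

/-- the norm bound -/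
lemma norm_bound (hd : 0 < d)
    (hsep : ∀ γ ∈ Γ, ∀ γ' ∈ Γ, γ ≠ γ' → d ≤ |γ - γ'|) (z : ℂ) :
    ‖∏' γ : S, (1 - Complex.exp (2 * (z - ((γ : ℝ) : ℂ))))‖ ≤
      Real.exp (2 + 1/d + (1 - Real.exp (-(2*d)))⁻¹) * Real.exp ((3/d + 1) * z.re^2) := by
  have hm := mult_aux hd hsep z
  have hp := hm.hasProd
  have hpn : HasProd (fun γ : S => ‖1 - Complex.exp (2 * (z - ((γ : ℝ) : ℂ)))‖)
      ‖∏' γ : S, (1 - Complex.exp (2 * (z - ((γ : ℝ) : ℂ))))‖ := by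
    have := hp.map (normHom (α := ℂ)).toMonoidHom continuous_norm
    exact this
  apply le_of_tendsto hpn
  filter_upwards with s
  calc ∏ γ ∈ s, ‖1 - Complex.exp (2 * (z - ((γ.1 : ℝ) : ℂ)))‖
      ≤ ∏ γ ∈ s, (1 + Real.exp (2*(z.re - γ.1))) := by
        apply Finset.prod_le_prod (fun γ _ => norm_nonneg _)
        intro γ _
        calc ‖1 - Complex.exp (2 * (z - ((γ.1 : ℝ) : ℂ)))‖
            ≤ ‖(1:ℂ)‖ + ‖Complex.exp (2 * (z - ((γ.1 : ℝ) : ℂ)))‖ := norm_sub_le _ _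
          _ = 1 + Real.exp (2*(z.re - γ.1)) := by rw [norm_one, norm_factor]
    _ ≤ _ := prod_le hd hsep z.re s









lemma entire_factor (γ : ℝ) : Differentiable ℂ (fun z : ℂ => 1 - Complex.exp (2 * (z - (γ:ℂ)))) := by
  apply (differentiable_const (1:ℂ)).sub
  apply Complex.differentiable_exp.comp
  exact ((differentiable_id.sub_const _).const_mul _)

lemma diff_aux (hd : 0 < d)
    (hsep : ∀ γ ∈ Γ, ∀ γ' ∈ Γ, γ ≠ γ' → d ≤ |γ - γ'|) :
    Differentiable ℂ (fun z : ℂ =>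
      ∏' γ : S, (1 - Complex.exp (2 * (z - ((γ : ℝ) : ℂ))))) := by
  intro z₀
  classical
  set x₀ := z₀.re with hx₀
  set U := Metric.ball z₀ 1 with hU'
  have hU : IsOpen U := Metric.isOpen_ball
  have hz₀U : z₀ ∈ U := Metric.mem_ball_self one_pos
  set T : Set S := {γ : S | γ.1 ≤ x₀ + 2} with hT
  have hTfin : T.Finite := bdd_finite hd hsep _
  haveI : Fintype ↥T := hTfin.fintype
  have hTc' : ∀ γ : S, γ ∉ T → x₀ + 2 < γ.1 := by
    intro γ hγ
    simp only [hT, Set.mem_setOf_eq, not_le] at hγ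
    exact hγ
  have hTc : ∀ γ : ↥Tᶜ, x₀ + 2 < γ.1.1 := fun γ => hTc' γ.1 γ.2
  have hre : ∀ z ∈ U, z.re < x₀ + 1 := by
    intro z hz
    have h1 : dist z z₀ < 1 := Metric.mem_ball.mp hz
    have h2 : |(z - z₀).re| ≤ ‖z - z₀‖ := Complex.abs_re_le_norm _
    rw [← Complex.dist_eq] at h2
    have h3 : (z - z₀).re = z.re - x₀ := by simp [hx₀]
    rw [h3] at h2
    have := abs_lt.mp (h2.trans_lt h1)
    linarith [this.2]
  have hsmall : ∀ z ∈ U, ∀ γ : ↥Tᶜ,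
      ‖Complex.exp (2 * (z - ((γ.1.1 : ℝ) : ℂ)))‖ ≤ Real.exp (2*(x₀ + 1 - γ.1.1)) := by
    intro z hz γ
    rw [norm_factor]
    exact Real.exp_le_exp.mpr (by linarith [hre z hz])
  have hhalf : ∀ z ∈ U, ∀ γ : ↥Tᶜ,
      ‖Complex.exp (2 * (z - ((γ.1.1 : ℝ) : ℂ)))‖ ≤ 1/2 := by
    intro z hz γ
    refine (hsmall z hz γ).trans ?_
    have h3 : Real.exp (2*(x₀ + 1 - γ.1.1)) ≤ Real.exp (-2) :=
      Real.exp_le_exp.mpr (by linarith [hTc γ])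
    have h4 : Real.exp (-2 : ℝ) ≤ 1/2 := by
      rw [Real.exp_neg, inv_le_comm₀ (Real.exp_pos _) (by norm_num)]
      linarith [Real.add_one_le_exp (2:ℝ)]
    linarith
  -- summability of logs for z in U
  have hlogsum : ∀ z ∈ U, Summable (fun γ : ↥Tᶜ =>
      Complex.log (1 - Complex.exp (2 * (z - ((γ.1.1 : ℝ) : ℂ))))) := by
    intro z hz
    obtain ⟨hsum, hle⟩ := summable_log hd hsep x₀ T hTc'
      (fun γ : ↥Tᶜ => -Complex.exp (2 * (z - ((γ.1.1 : ℝ) : ℂ))))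
      (fun γ => by rw [norm_neg]; exact hsmall z hz γ)
    apply Summable.of_norm_bounded hsum
    intro γ
    have := hle γ
    simpa [sub_eq_add_neg] using this
  set L : ℂ → ℂ := fun z => ∑' γ : ↥Tᶜ,
    Complex.log (1 - Complex.exp (2 * (z - ((γ.1.1 : ℝ) : ℂ)))) with hL'
  have hLdiff : DifferentiableOn ℂ L U := by
    apply Complex.differentiableOn_tsum_of_summable_norm
      (u := fun γ : ↥Tᶜ => (3/2 : ℝ) * Real.exp (2*(x₀ + 1 - γ.1.1)))
    · exact ((summable_exp_aux hd hsep (x₀+1)).subtype _).mul_left _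
    · intro γ
      apply DifferentiableOn.clog ((entire_factor γ.1.1).differentiableOn)
      intro z hz
      rw [Complex.mem_slitPlane_iff]
      left
      have h1 : (1 - Complex.exp (2 * (z - ((γ.1.1 : ℝ) : ℂ)))).re
          = 1 - (Complex.exp (2 * (z - ((γ.1.1 : ℝ) : ℂ)))).re := by simp
      rw [h1]
      have h2 : (Complex.exp (2 * (z - ((γ.1.1 : ℝ) : ℂ)))).re ≤ 1/2 := by
        refine le_trans ?_ (hhalf z hz γ)
        exact Complex.re_le_norm _
      linarith
    · exact hU
    · intro γ z hz
      have h1 : ‖-Complex.exp (2 * (z - ((γ.1.1 : ℝ) : ℂ)))‖ ≤ 1/2 := by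
        rw [norm_neg]; exact hhalf z hz γ
      have h2 := Complex.norm_log_one_add_half_le_self h1
      rw [norm_neg] at h2
      calc ‖Complex.log (1 - Complex.exp (2 * (z - ((γ.1.1 : ℝ) : ℂ))))‖
          = ‖Complex.log (1 + -Complex.exp (2 * (z - ((γ.1.1 : ℝ) : ℂ))))‖ := by
            rw [sub_eq_add_neg]
        _ ≤ (3/2 : ℝ) * ‖Complex.exp (2 * (z - ((γ.1.1 : ℝ) : ℂ)))‖ := h2
        _ ≤ (3/2 : ℝ) * Real.exp (2*(x₀ + 1 - γ.1.1)) := by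
            have := hsmall z hz γ; linarith
  set G : ℂ → ℂ := fun z =>
    (∏ γ : ↥T, (1 - Complex.exp (2 * (z - ((γ.1.1 : ℝ) : ℂ))))) * Complex.exp (L z) with hG'
  have hGdiff : DifferentiableOn ℂ G U := by
    apply DifferentiableOn.mul ?_ hLdiff.cexp
    exact (Differentiable.fun_finsetProd
      (fun (γ : ↥T) _ => entire_factor (γ.1.1 : ℝ))).differentiableOn
  -- the tprod equals G on U
  have hEq : Set.EqOn (fun z : ℂ =>
      ∏' γ : S, (1 - Complex.exp (2 * (z - ((γ : ℝ) : ℂ))))) G U := by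
    intro z hz
    have hmz := mult_aux hd hsep z
    have htail : HasProd (fun γ : ↥Tᶜ => 1 - Complex.exp (2 * (z - ((γ.1.1 : ℝ) : ℂ))))
        (Complex.exp (L z)) := by
      have hh := ((hlogsum z hz).hasSum).cexp
      have hfun : (Complex.exp ∘ fun γ : ↥Tᶜ =>
          Complex.log (1 - Complex.exp (2 * (z - ((γ.1.1 : ℝ) : ℂ)))))
          = fun γ : ↥Tᶜ => 1 - Complex.exp (2 * (z - ((γ.1.1 : ℝ) : ℂ))) := by
        funext γ
        simp only [Function.comp_apply]
        apply Complex.exp_log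
        apply factor_ne_zero
        linarith [hre z hz, hTc γ]
      rwa [hfun] at hh
    have h1 : Multipliable ((fun γ : S => 1 - Complex.exp (2 * (z - ((γ : ℝ) : ℂ))))
        ∘ (Subtype.val : ↥T → S)) := ⟨_, hasProd_fintype _⟩
    have h2 : Multipliable ((fun γ : S => 1 - Complex.exp (2 * (z - ((γ : ℝ) : ℂ))))
        ∘ (Subtype.val : ↥Tᶜ → S)) := htail.multipliable
    have hsplit := Multipliable.tprod_mul_tprod_compl
      (f := fun γ : S => 1 - Complex.exp (2 * (z - ((γ : ℝ) : ℂ)))) (s := T) h1 h2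
    have h3 : ∏' γ : ↥Tᶜ, (1 - Complex.exp (2 * (z - ((γ.1.1 : ℝ) : ℂ))))
        = Complex.exp (L z) := htail.tprod_eq
    have h4 : ∏' γ : ↥T, (1 - Complex.exp (2 * (z - ((γ.1.1 : ℝ) : ℂ))))
        = ∏ γ : ↥T, (1 - Complex.exp (2 * (z - ((γ.1.1 : ℝ) : ℂ)))) := tprod_fintype _
    simp only [hG']
    rw [← hsplit, h3, h4]
  have hGz : DifferentiableAt ℂ G z₀ := hGdiff.differentiableAt (hU.mem_nhds hz₀U)
  have hev : (fun z : ℂ => ∏' γ : S, (1 - Complex.exp (2 * (z - ((γ : ℝ) : ℂ)))))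
      =ᶠ[nhds z₀] G := Filter.eventuallyEq_of_mem (hU.mem_nhds hz₀U) hEq
  exact (hev.differentiableAt_iff).mpr hGz



end Stmt12Aux

/-- For a separated set `Γ` with separation constant `d`, the product
`P⁺(z) = ∏_{γ∈Γ, γ≥0} (1 − e^{2(z−γ)})` converges, is entire, and satisfies
`|P⁺(x+iy)| ≤ C e^{K x²}` with `C, K` depending only on `d`. -/
theorem stmt12 (Γ : Set ℝ) (d : ℝ) (hd : 0 < d)
    (hsep : ∀ γ ∈ Γ, ∀ γ' ∈ Γ, γ ≠ γ' → d ≤ |γ - γ'|) :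
    (∀ z : ℂ, Multipliable
      (fun γ : {γ : ℝ // γ ∈ Γ ∧ 0 ≤ γ} => 1 - Complex.exp (2 * (z - ((γ : ℝ) : ℂ))))) ∧
    Differentiable ℂ (fun z : ℂ =>
      ∏' γ : {γ : ℝ // γ ∈ Γ ∧ 0 ≤ γ}, (1 - Complex.exp (2 * (z - ((γ : ℝ) : ℂ))))) ∧
    ∃ C > (0 : ℝ), ∃ K > (0 : ℝ), ∀ x y : ℝ,
      ‖∏' γ : {γ : ℝ // γ ∈ Γ ∧ 0 ≤ γ},
          (1 - Complex.exp (2 * ((x : ℂ) + y * Complex.I - ((γ : ℝ) : ℂ))))‖ ≤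
        C * Real.exp (K * x ^ 2) := by
  refine ⟨fun z => Stmt12Aux.mult_aux hd hsep z, Stmt12Aux.diff_aux hd hsep,
    Real.exp (2 + 1/d + (1 - Real.exp (-(2*d)))⁻¹), Real.exp_pos _,
    3/d + 1, by positivity, ?_⟩
  intro x y
  have h := Stmt12Aux.norm_bound hd hsep ((x : ℂ) + y * Complex.I)
  have hre : ((x:ℂ) + y * Complex.I).re = x := by simp
  rw [hre] at h
  exact h
end

section
/- Let f(x) = C(e^{-(x-1)²} − σ e^{-(x+1)²}) = C e^{-x²-1}(e^{2x} − σ e^{-2x}) with σ ∈ ℂ \ ℝ and C ≠ 0. Then there is no λ ∈ ℂ with 0 < Im λ < π such that f(λ) = f(conj(λ)) = 0. -/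
open Complex

/-- For `σ ∈ ℂ \ ℝ` and `C ≠ 0`, the function
`f(z) = C e^{-z²-1}(e^{2z} − σe^{-2z})` has no pair of zeros `λ, conj λ`
with `0 < Im λ < π`. -/
theorem stmt13 (σ : ℂ) (hσ : σ.im ≠ 0) (C : ℂ) (hC : C ≠ 0) :
    ¬ ∃ l : ℂ, 0 < l.im ∧ l.im < Real.pi ∧
      C * Complex.exp (-l ^ 2 - 1) * (Complex.exp (2 * l) - σ * Complex.exp (-(2 * l))) = 0 ∧
      C * Complex.exp (-(starRingEnd ℂ l) ^ 2 - 1) *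
        (Complex.exp (2 * starRingEnd ℂ l) - σ * Complex.exp (-(2 * starRingEnd ℂ l))) = 0 := by
  rintro ⟨l, -, -, h1, h2⟩
  have e1 : Complex.exp (2 * l) - σ * Complex.exp (-(2 * l)) = 0 := by
    have := mul_ne_zero hC (Complex.exp_ne_zero (-l ^ 2 - 1))
    exact (mul_eq_zero.mp h1).resolve_left this
  have e2 : Complex.exp (2 * starRingEnd ℂ l) -
      σ * Complex.exp (-(2 * starRingEnd ℂ l)) = 0 := by
    have := mul_ne_zero hC (Complex.exp_ne_zero (-(starRingEnd ℂ l) ^ 2 - 1))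
    exact (mul_eq_zero.mp h2).resolve_left this
  have s1 : σ = Complex.exp (4 * l) := by
    have h := sub_eq_zero.mp e1
    have : Complex.exp (2 * l) * Complex.exp (2 * l) =
        σ * Complex.exp (-(2 * l)) * Complex.exp (2 * l) := by rw [← h]
    rw [← Complex.exp_add, mul_assoc, ← Complex.exp_add] at this
    simpa [show (2:ℂ) * l + 2 * l = 4 * l by ring] using this.symm
  have s2 : σ = Complex.exp (4 * starRingEnd ℂ l) := by
    have h := sub_eq_zero.mp e2
    have : Complex.exp (2 * starRingEnd ℂ l) * Complex.exp (2 * starRingEnd ℂ l) =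
        σ * Complex.exp (-(2 * starRingEnd ℂ l)) * Complex.exp (2 * starRingEnd ℂ l) := by
      rw [← h]
    rw [← Complex.exp_add, mul_assoc, ← Complex.exp_add] at this
    simpa [show (2:ℂ) * starRingEnd ℂ l + 2 * starRingEnd ℂ l = 4 * starRingEnd ℂ l by ring]
      using this.symm
  have : σ = starRingEnd ℂ σ := by
    calc σ = Complex.exp (4 * starRingEnd ℂ l) := s2
      _ = starRingEnd ℂ (Complex.exp (4 * l)) := by rw [← Complex.exp_conj]; rw [map_mul]; norm_num [Complex.conj_ofNat]
      _ = starRingEnd ℂ σ := by rw [← s1]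
  exact hσ (Complex.conj_eq_iff_im.mp this.symm)
end
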